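/- arXiv:2210.09528 — 4 statements merged into one kernel-verified Lean document; each statement's English description precedes it below -/
import Mathlib

section
/- If a simple graph G has a perfect ordered matching, then G has a unique perfect matching (i.e., any two perfect matchings of G coincide as sets of edges). -/
open SimpleGraph

namespace DS

variable {V : Type*}

/-- The set of edges of a matching presented by the endpoint functions `u`, `v`. -/
def omEdges {s : ℕ} (u v : Fin s → V) : Set (Sym2 V) := {e | ∃ i, e = s(u i, v i)}

/-- `(u, v)` describes a matching of size `s` in `G`: the `2s` endpoints are pairwise
distinct (so the edges are pairwise disjoint) and each pair `{u i, v i}` is an edge. -/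
def IsMatchingPair (G : SimpleGraph V) {s : ℕ} (u v : Fin s → V) : Prop :=
  Function.Injective (Sum.elim u v) ∧ ∀ i, G.Adj (u i) (v i)

/-- `(u, v)` describes an ordered matching: a matching such that `{u 1, …, u s}` is an
independent set and `{u i, v j} ∈ E(G)` implies `i ≤ j`. -/
def IsOrderedMatching (G : SimpleGraph V) {s : ℕ} (u v : Fin s → V) : Prop :=
  IsMatchingPair G u v ∧ (∀ i j, ¬ G.Adj (u i) (u j)) ∧
    ∀ i j, G.Adj (u i) (v j) → i ≤ j

/-- The matching number of `G`. -/
noncomputable def nu (G : SimpleGraph V) : ℕ :=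
  sSup {s | ∃ u v : Fin s → V, IsMatchingPair G u v}

/-- The ordered matching number of `G`. -/
noncomputable def nu0 (G : SimpleGraph V) : ℕ :=
  sSup {s | ∃ u v : Fin s → V, IsOrderedMatching G u v}

/-- A walk is `M`-alternating if its edges are alternately in `M` and not in `M`. -/
def IsAlt {G : SimpleGraph V} (M : Set (Sym2 V)) {a b : V} (w : G.Walk a b) : Prop :=
  List.Chain' (fun e f => (e ∈ M ↔ f ∉ M)) w.edges

/-- The walk `w` is nonempty and its first and last edges belong to `M`. -/
def FirstLastInM {G : SimpleGraph V} (M : Set (Sym2 V)) {a b : V} (w : G.Walk a b) : Prop :=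
  ∃ h : w.edges ≠ [], w.edges.head h ∈ M ∧ w.edges.getLast h ∈ M

/-- `w` is an `M`-admissible path for the vertex `x` (with respect to the ordered matching
presented by `(u, v)`): an `M`-alternating path with origin `x` whose first and last
edges are in `M`, each of whose edges has an end in `A = range u` and an end in
`B = range v`. -/
def IsAdmissible {G : SimpleGraph V} {s : ℕ} (u v : Fin s → V) {a b : V}
    (w : G.Walk a b) (x : V) : Prop :=
  a = x ∧ IsAlt (omEdges u v) w ∧ FirstLastInM (omEdges u v) w ∧
    ∀ e ∈ w.edges, ∃ i j, e = s(u i, v j)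

/-- `ℓ(x)`: the length of a longest `M`-admissible path for `x`. -/
noncomputable def ellv (G : SimpleGraph V) {s : ℕ} (u v : Fin s → V) (x : V) : ℕ :=
  sSup {n | ∃ (b : V) (w : G.Walk x b), IsAdmissible u v w x ∧ w.length = n}

/-- `ℓ(M)`: the length of a longest `M`-alternating path in `G`. -/
noncomputable def ellM (G : SimpleGraph V) (M : Set (Sym2 V)) : ℕ :=
  sSup {n | ∃ (a b : V) (w : G.Walk a b), IsAlt M w ∧ w.length = n}

/-- `ℓ₀(M) = max {ℓ(x) : x ∈ B}`. -/
noncomputable def ell0 (G : SimpleGraph V) {s : ℕ} (u v : Fin s → V) : ℕ :=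
  sSup {n | ∃ i : Fin s, ellv G u v (v i) = n}

/-- `ℓ₁(M) = max {ℓ(x) + ℓ(y) + 1 : {x, y} ∈ E(G[B])}` (with the convention that this
is `0` when `B` is independent, since `sSup ∅ = 0`). -/
noncomputable def ell1 (G : SimpleGraph V) {s : ℕ} (u v : Fin s → V) : ℕ :=
  sSup {n | ∃ i j : Fin s, G.Adj (v i) (v j) ∧ ellv G u v (v i) + ellv G u v (v j) + 1 = n}

/-- `ℓ(G) = min {ℓ(M) : M a maximum ordered matching of G}`. -/
noncomputable def ellG (G : SimpleGraph V) : ℕ :=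
  sInf {n | ∃ u v : Fin (nu0 G) → V, IsOrderedMatching G u v ∧ ellM G (omEdges u v) = n}

open MvPolynomial in
/-- The `n`-th symbolic power `J(G)^{(n)} = ⋂_{{u,v} ∈ E(G)} (x_u, x_v)^n` of the cover
ideal of `G`. -/
noncomputable def symbPow (K : Type*) [Field K] (G : SimpleGraph V) (n : ℕ) :
    Ideal (MvPolynomial V K) :=
  ⨅ (p : V × V) (_ : G.Adj p.1 p.2), (Ideal.span {X p.1, X p.2}) ^ n

/-- The cover ideal `J(G) = ⋂_{{u,v} ∈ E(G)} (x_u, x_v)`. -/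
noncomputable def coverIdeal (K : Type*) [Field K] (G : SimpleGraph V) :
    Ideal (MvPolynomial V K) :=
  symbPow K G 1

/-- `depth R/I`: the length of a maximal `R/I`-regular sequence contained in the maximal
homogeneous ideal `(x_1, …, x_r)` of `R = K[x_1, …, x_r]`. -/
noncomputable def depthQ (K : Type*) [Field K] (I : Ideal (MvPolynomial V K)) : ℕ :=
  sSup {n | ∃ rs : List (MvPolynomial V K), rs.length = n ∧
    (∀ f ∈ rs, f ∈ Ideal.span (Set.range (MvPolynomial.X : V → MvPolynomial V K))) ∧
    RingTheory.Sequence.IsRegular (MvPolynomial V K ⧸ I) rs}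

/-- The stability index of the symbolic depth function of `J(G)`:
`sdst(J(G)) = min {n₀ ≥ 1 : depth R/J(G)^{(n)} = r − ν₀(G) − 1 for all n ≥ n₀}`. -/
noncomputable def sdst (K : Type*) [Field K] [Fintype V] (G : SimpleGraph V) : ℕ :=
  sInf {n0 | 1 ≤ n0 ∧ ∀ n, n0 ≤ n →
    depthQ K (symbPow K G n) = Fintype.card V - nu0 G - 1}

/-- The stability index of the depth function of `J(G)`:
the least `n₀ ≥ 1` such that `depth R/J(G)^n` is constant for `n ≥ n₀` (hence equal to
its limit value). -/
noncomputable def dst (K : Type*) [Field K] [Fintype V] (G : SimpleGraph V) : ℕ :=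
  sInf {n0 | 1 ≤ n0 ∧ ∀ m n, n0 ≤ m → n0 ≤ n →
    depthQ K (coverIdeal K G ^ m) = depthQ K (coverIdeal K G ^ n)}

end DS

/-- If a simple graph `G` has a perfect ordered matching, then any two perfect matchings
of `G` coincide as sets of edges. -/
theorem stmt_0 {V : Type*} [Fintype V] (G : SimpleGraph V)
    (h : ∃ (s : ℕ) (u v : Fin s → V), DS.IsOrderedMatching G u v ∧
      Function.Surjective (Sum.elim u v))
    (M₁ M₂ : G.Subgraph) (h₁ : M₁.IsPerfectMatching) (h₂ : M₂.IsPerfectMatching) :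
    M₁.edgeSet = M₂.edgeSet := by
  obtain ⟨s, u, v, ⟨⟨hinj, hadj⟩, hindep, hle⟩, hsurj⟩ := h
  have huinj : Function.Injective u := fun i j hij => by
    have := hinj (a₁ := Sum.inl i) (a₂ := Sum.inl j) hij
    simpa using this
  -- every perfect matching contains each edge s(u i, v i)
  have key : ∀ (M : G.Subgraph), M.IsPerfectMatching → ∀ i : Fin s, M.Adj (u i) (v i) := by
    intro M hM
    have main : ∀ n : ℕ, ∀ i : Fin s, s - i.val ≤ n → M.Adj (u i) (v i) := by
      intro n
      induction n with
      | zero => intro i hi; exact absurd hi (by omega)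
      | succ n ih =>
        intro i hi
        obtain ⟨w, hw, huniq⟩ := hM.1 (hM.2 (u i))
        obtain ⟨x, hx⟩ := hsurj w
        cases x with
        | inl j =>
          simp only [Sum.elim_inl] at hx
          subst hx
          exact absurd (M.adj_sub hw) (hindep i j)
        | inr j =>
          simp only [Sum.elim_inr] at hx
          subst hx
          have hij : i ≤ j := hle i j (M.adj_sub hw)
          rcases eq_or_lt_of_le hij with heq | hlt
          · rwa [← heq] at hw
          · have hj : M.Adj (u j) (v j) := ih j (by omega)
            obtain ⟨w', hw', huniq'⟩ := hM.1 (hM.2 (v j))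
            have e1 : u i = w' := huniq' _ hw.symm
            have e2 : u j = w' := huniq' _ hj.symm
            have : i = j := huinj (e1.trans e2.symm)
            omega
    intro i
    exact main s i (by omega)
  have sub : ∀ (M M' : G.Subgraph), M.IsPerfectMatching → M'.IsPerfectMatching →
      M.edgeSet ⊆ M'.edgeSet := by
    intro M M' hM hM' e he
    induction e using Sym2.ind with
    | _ a b =>
      rw [SimpleGraph.Subgraph.mem_edgeSet] at he ⊢
      obtain ⟨x, hx⟩ := hsurj a
      cases x with
      | inl i =>
        simp only [Sum.elim_inl] at hx
        subst hx
        obtain ⟨w, hw, huniq⟩ := hM.1 (hM.2 (u i))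
        have e1 : b = w := huniq _ he
        have e2 : v i = w := huniq _ (key M hM i)
        rw [e1.trans e2.symm]
        exact key M' hM' i
      | inr i =>
        simp only [Sum.elim_inr] at hx
        subst hx
        obtain ⟨w, hw, huniq⟩ := hM.1 (hM.2 (v i))
        have e1 : b = w := huniq _ he
        have e2 : u i = w := huniq _ (key M hM i).symm
        rw [e1.trans e2.symm]
        exact (key M' hM' i).symm
  exact Set.Subset.antisymm (sub M₁ M₂ h₁ h₂) (sub M₂ M₁ h₂ h₁)
end

section
/- Let M be an ordered matching in a simple graph G with free parameter set A and partner set B. If B is an independent set of G, then every M-alternating path whose first edge and last edge both lie in M is a simple path (all of its vertices are distinct). -/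
open SimpleGraph

/-!
Along an `M`-alternating walk that starts with a matching edge, every non-matching edge
leaves the free vertex `u i` of some matching edge and, the free parameter set being
independent, enters the partner `v m` of a later matching edge: the ordering forces
`i ≤ m`, and `i ≠ m` because the edge is not in `M`. So a walk starting at a partner
vertex runs through `v i₀, u i₀, v i₁, u i₁, …` with `i₀ < i₁ < ⋯` and repeats no
vertex.
A walk starting at a free vertex is handled by the same argument for the dual matching,
which swaps the roles of `u` and `v` and reverses the order: as the partner set is
independent, this is again an ordered matching.
-/

namespace DS

open OrderDual

variable {V ι : Type*}

section Walks

variable {G : SimpleGraph V} {M : Set (Sym2 V)}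

lemma IsAlt.tail {a b c : V} {h : G.Adj a b} {w : G.Walk b c} (halt : IsAlt M (.cons h w)) :
    IsAlt M w :=
  List.IsChain.tail halt

lemma FirstLastInM.exists_start_mem {a b : V} {w : G.Walk a b} (hfl : FirstLastInM M w) :
    ∃ c, s(a, c) ∈ M := by
  obtain ⟨hne, hhead, -⟩ := hfl
  cases w with
  | nil => exact absurd rfl hne
  | cons _ _ => exact ⟨_, hhead⟩

lemma IsAlt.firstLastInM_drop_two {a b c d : V} {h₁ : G.Adj a b} {h₂ : G.Adj b c}
    {w : G.Walk c d} (halt : IsAlt M (.cons h₁ (.cons h₂ w)))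
    (hfl : FirstLastInM M (.cons h₁ (.cons h₂ w))) :
    FirstLastInM M w := by
  obtain ⟨_, hhead, hlast⟩ := hfl
  have hchain := List.isChain_cons_cons.mp halt
  have hsecond : s(b, c) ∉ M := hchain.1.mp hhead
  cases w with
  | nil => exact absurd hlast hsecond
  | cons h₃ w =>
    refine ⟨List.cons_ne_nil _ _, ?_, ?_⟩
    · exact not_not.mp ((List.isChain_cons_cons.mp hchain.2).1.not.mp hsecond)
    · simpa [List.getLast_cons] using hlast

lemma IsAlt.second_notMem {a b c d : V} {h₁ : G.Adj a b} {h₂ : G.Adj b c}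
    {w : G.Walk c d} (halt : IsAlt M (.cons h₁ (.cons h₂ w))) (hfirst : s(a, b) ∈ M) :
    s(b, c) ∉ M :=
  (List.isChain_cons_cons.mp halt).1.mp hfirst

end Walks

def pairEdges (p q : ι → V) : Set (Sym2 V) := Set.range fun i => s(p i, q i)

lemma omEdges_eq_pairEdges {s : ℕ} (u v : Fin s → V) : omEdges u v = pairEdges u v := by
  ext e
  exact exists_congr fun _ => eq_comm

lemma pairEdges_dual (p q : ι → V) :
    pairEdges (q ∘ ofDual) (p ∘ ofDual) = pairEdges p q := by
  ext e
  exact ⟨fun ⟨i, hi⟩ => ⟨ofDual i, Sym2.eq_swap.trans hi⟩,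
    fun ⟨i, hi⟩ => ⟨toDual i, Sym2.eq_swap.trans hi⟩⟩

def vertsFrom [Preorder ι] (p q : ι → V) (i : ι) : Set V :=
  {x | ∃ k, i ≤ k ∧ (x = p k ∨ x = q k)}

lemma vertsFrom_anti [Preorder ι] (p q : ι → V) {i m : ι} (him : i ≤ m) :
    vertsFrom p q m ⊆ vertsFrom p q i :=
  fun _ ⟨k, hmk, hk⟩ => ⟨k, him.trans hmk, hk⟩

/-- An ordered matching with free vertices `p i` and partners `q i`, except that the pairs
`{p i, q i}` need not be edges: along a walk they are edges anyway. -/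
structure IsOrderedPairing [LE ι] (G : SimpleGraph V) (p q : ι → V) : Prop where
  injective : Function.Injective (Sum.elim p q)
  free_indep : ∀ i j, ¬ G.Adj (p i) (p j)
  le_of_adj : ∀ i j, G.Adj (p i) (q j) → i ≤ j

lemma IsOrderedMatching.isOrderedPairing {G : SimpleGraph V} {s : ℕ} {u v : Fin s → V}
    (h : IsOrderedMatching G u v) : IsOrderedPairing G u v :=
  ⟨h.1.1, h.2.1, h.2.2⟩

namespace IsOrderedPairing

variable [PartialOrder ι] {G : SimpleGraph V} {p q : ι → V}

lemma dual (h : IsOrderedPairing G p q) (hq : ∀ i j, ¬ G.Adj (q i) (q j)) :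
    IsOrderedPairing G (q ∘ ofDual) (p ∘ ofDual) where
  injective := by
    have hswap : Sum.elim (q ∘ ofDual) (p ∘ ofDual) =
        Sum.elim p q ∘ Sum.map ofDual ofDual ∘ Sum.swap := by
      ext (_ | _) <;> rfl
    rw [hswap]
    exact h.injective.comp <| (Sum.map_injective.mpr ⟨ofDual.injective, ofDual.injective⟩).comp
      Sum.swap_leftInverse.injective
  free_indep i j := hq (ofDual i) (ofDual j)
  le_of_adj i j hadj := h.le_of_adj (ofDual j) (ofDual i) hadj.symm

lemma p_ne_q (h : IsOrderedPairing G p q) (i j : ι) : p i ≠ q j :=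
  fun hij => Sum.inl_ne_inr (h.injective hij)

lemma p_injective (h : IsOrderedPairing G p q) : Function.Injective p :=
  fun _ _ hij => Sum.inl_injective (h.injective hij)

lemma q_injective (h : IsOrderedPairing G p q) : Function.Injective q :=
  fun _ _ hij => Sum.inr_injective (h.injective hij)

lemma eq_p_of_mem_pairEdges (h : IsOrderedPairing G p q) {i : ι} {c : V}
    (hc : s(q i, c) ∈ pairEdges p q) : c = p i := by
  obtain ⟨j, hj⟩ := hc
  rcases Sym2.eq_iff.mp hj with ⟨hpq, -⟩ | ⟨hpc, hqj⟩
  · exact absurd hpq (h.p_ne_q j i)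
  · rw [← hpc, h.q_injective hqj]

lemma exists_lt_of_adj_of_notMem (h : IsOrderedPairing G p q) {i : ι} {d e : V}
    (hadj : G.Adj (p i) d) (hnot : s(p i, d) ∉ pairEdges p q) (hde : s(d, e) ∈ pairEdges p q) :
    ∃ m, i < m ∧ d = q m := by
  obtain ⟨m, hm⟩ := hde
  rcases Sym2.eq_iff.mp hm with ⟨rfl, -⟩ | ⟨-, rfl⟩
  · exact absurd hadj (h.free_indep i m)
  · refine ⟨m, (h.le_of_adj i m hadj).lt_of_ne ?_, rfl⟩
    rintro rfl
    exact hnot ⟨i, rfl⟩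

lemma p_notMem_vertsFrom (h : IsOrderedPairing G p q) {i m : ι} (him : i < m) :
    p i ∉ vertsFrom p q m := by
  rintro ⟨k, hmk, hk | hk⟩
  · exact (him.trans_le hmk).ne (h.p_injective hk)
  · exact h.p_ne_q i k hk

lemma q_notMem_vertsFrom (h : IsOrderedPairing G p q) {i m : ι} (him : i < m) :
    q i ∉ vertsFrom p q m := by
  rintro ⟨k, hmk, hk | hk⟩
  · exact h.p_ne_q k i hk.symm
  · exact (him.trans_le hmk).ne (h.q_injective hk)

theorem support_nodup_and_mem_vertsFrom (h : IsOrderedPairing G p q) :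
    ∀ {a b : V} (w : G.Walk a b) (i : ι), a = q i → IsAlt (pairEdges p q) w →
      FirstLastInM (pairEdges p q) w →
        w.support.Nodup ∧ ∀ x ∈ w.support, x ∈ vertsFrom p q i
  | _, _, .nil, _, _, _, hfl => absurd rfl hfl.1
  | _, _, .cons _ .nil, i, rfl, _, hfl => by
    obtain rfl := h.eq_p_of_mem_pairEdges hfl.2.1
    simp only [Walk.support_cons, Walk.support_nil, List.nodup_cons, List.mem_cons,
      List.not_mem_nil, or_false, not_false_eq_true, List.nodup_nil, and_true,
      forall_eq_or_imp, forall_eq]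
    exact ⟨(h.p_ne_q i i).symm, ⟨i, le_rfl, .inr rfl⟩, ⟨i, le_rfl, .inl rfl⟩⟩
  | _, _, .cons _ (.cons hadj w), i, rfl, halt, hfl => by
    obtain rfl := h.eq_p_of_mem_pairEdges hfl.2.1
    have hfl' := halt.firstLastInM_drop_two hfl
    obtain ⟨e, he⟩ := hfl'.exists_start_mem
    obtain ⟨m, him, hm⟩ :=
      h.exists_lt_of_adj_of_notMem hadj (halt.second_notMem hfl.2.1) he
    obtain ⟨hnodup, hmem⟩ := h.support_nodup_and_mem_vertsFrom w m hm halt.tail.tail hfl'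
    simp only [Walk.support_cons, List.nodup_cons, List.mem_cons, not_or, forall_eq_or_imp]
    exact ⟨⟨⟨(h.p_ne_q i i).symm, fun hq => h.q_notMem_vertsFrom him (hmem _ hq)⟩,
      fun hp => h.p_notMem_vertsFrom him (hmem _ hp), hnodup⟩,
      ⟨i, le_rfl, .inr rfl⟩, ⟨i, le_rfl, .inl rfl⟩,
      fun x hx => vertsFrom_anti p q him.le (hmem x hx)⟩

end IsOrderedPairing

end DS

theorem stmt_1_general {V : Type*} (G : SimpleGraph V) {s : ℕ} (u v : Fin s → V)
    (hM : DS.IsOrderedMatching G u v)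
    (hB : ∀ i j : Fin s, ¬ G.Adj (v i) (v j))
    {a b : V} (w : G.Walk a b)
    (halt : DS.IsAlt (DS.omEdges u v) w)
    (hfl : DS.FirstLastInM (DS.omEdges u v) w) :
    w.support.Nodup := by
  rw [DS.omEdges_eq_pairEdges] at halt hfl
  have hord := hM.isOrderedPairing
  obtain ⟨c, j, hj⟩ := hfl.exists_start_mem
  rcases Sym2.eq_iff.mp hj with ⟨rfl, -⟩ | ⟨-, rfl⟩
  · rw [← DS.pairEdges_dual] at halt hfl
    exact ((hord.dual hB).support_nodup_and_mem_vertsFrom w (OrderDual.toDual j) rfl halt hfl).1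
  · exact (hord.support_nodup_and_mem_vertsFrom w j rfl halt hfl).1

/-- Let `M` be an ordered matching in `G` with free parameter set `A = range u` and
partner set `B = range v`. If `B` is an independent set, then every `M`-alternating
walk whose first and last edges lie in `M` is a simple path. -/
theorem stmt_1 {V : Type*} [Fintype V] (G : SimpleGraph V) {s : ℕ} (u v : Fin s → V)
    (hM : DS.IsOrderedMatching G u v)
    (hB : ∀ i j : Fin s, ¬ G.Adj (v i) (v j))
    {a b : V} (w : G.Walk a b)
    (halt : DS.IsAlt (DS.omEdges u v) w)
    (hfl : DS.FirstLastInM (DS.omEdges u v) w) :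
    w.support.Nodup :=
  stmt_1_general G u v hM hB w halt hfl
end

section
/- Let M be an ordered matching in a simple graph G and let p be an M-admissible path for a vertex v covered by M. Then (1) p is a simple path, and (2) the length of p is odd. -/
open SimpleGraph

/-!
Starting from a free vertex `u i`, an admissible path runs `u i, v i, u i₁, v i₁, …` with
`i > i₁ > ⋯`: its `M`-edges join `u k` to `v k`, and a non-`M` edge `v k — u j` has `j < k`
because `u j ~ v k` forces `j ≤ k` in an ordered matching. Every vertex after `u i` therefore
has a smaller index, so no vertex repeats. From a partner vertex `v i` the indices increase
instead, which is the same argument for the reversed order on `Fin s` with `u` and `v`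
interchanged. Alternation with a first edge in `M` puts the `M`-edges exactly at the even
positions, so a path that also ends with an `M`-edge has odd length.
-/

open Function

lemma List.IsChain.getElem_iff_even {α : Type*} {P : α → Prop} {l : List α}
    (hl : l.IsChain fun a b => P a ↔ ¬ P b) (hhead : ∀ h : l ≠ [], P (l.head h)) :
    ∀ (n : ℕ) (hn : n < l.length), P l[n] ↔ Even n
  | 0, hn => by simpa [List.head_eq_getElem] using hhead (List.ne_nil_of_length_pos hn)
  | n + 1, hn => by
    rw [Nat.even_add_one, ← hl.getElem_iff_even hhead n (by omega)]
    have := hl.getElem n hn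
    tauto

lemma List.IsChain.odd_length {α : Type*} {P : α → Prop} {l : List α}
    (hl : l.IsChain fun a b => P a ↔ ¬ P b) (hne : l ≠ []) (hhead : P (l.head hne))
    (hlast : P (l.getLast hne)) : Odd l.length := by
  have hpos := List.length_pos_iff.mpr hne
  obtain ⟨k, hk⟩ := (hl.getElem_iff_even (fun _ => hhead) (l.length - 1) (by omega)).mp
    (by simpa [List.getLast_eq_getElem] using hlast)
  exact ⟨k, by omega⟩

namespace DS

lemma omEdges_eq_range {V : Type*} {s : ℕ} (u v : Fin s → V) :
    omEdges u v = Set.range fun i => s(u i, v i) := by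
  ext
  simp [omEdges, eq_comm]

lemma omEdges_comm {V : Type*} {s : ℕ} (u v : Fin s → V) : omEdges u v = omEdges v u := by
  ext
  simp [omEdges, Sym2.eq_swap]

section AlternatingWalk

variable {V ι : Type*} {G : SimpleGraph V} {p q : ι → V}

lemma eq_of_mk_mem_range (hp : Injective p) (hpq : ∀ a c, p a ≠ q c) {i : ι} {y : V}
    (h : s(p i, y) ∈ Set.range fun k => s(p k, q k)) : y = q i := by
  obtain ⟨k, hk⟩ := h
  rcases Sym2.eq_iff.mp hk with ⟨hi, rfl⟩ | ⟨-, hi⟩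
  · rw [hp hi]
  · exact absurd hi.symm (hpq i k)

lemma exists_lt_of_mk_notMem_range [PartialOrder ι] (hq : Injective q) (hpq : ∀ a c, p a ≠ q c)
    (hord : ∀ a c, G.Adj (p a) (q c) → a ≤ c) {i : ι} {z : V} (hadj : G.Adj (q i) z)
    (hAB : ∃ a c, s(q i, z) = s(p a, q c)) (hM : s(q i, z) ∉ Set.range fun k => s(p k, q k)) :
    ∃ a < i, z = p a := by
  obtain ⟨a, c, h⟩ := hAB
  rcases Sym2.eq_iff.mp h with ⟨hi, -⟩ | ⟨hi, rfl⟩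
  · exact absurd hi.symm (hpq a i)
  obtain rfl := hq hi
  refine ⟨a, (hord a _ hadj.symm).lt_of_ne ?_, rfl⟩
  rintro rfl
  exact hM ⟨a, Sym2.eq_swap⟩

theorem support_nodup_and_le [PartialOrder ι] (hp : Injective p) (hq : Injective q)
    (hpq : ∀ a c, p a ≠ q c) (hord : ∀ a c, G.Adj (p a) (q c) → a ≤ c) :
    ∀ {x b : V} (w : G.Walk x b) {i : ι}, x = p i →
      (∀ (n : ℕ) (hn : n < w.edges.length),
        w.edges[n] ∈ (Set.range fun k => s(p k, q k)) ↔ Even n) →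
      (∀ e ∈ w.edges, ∃ a c, e = s(p a, q c)) →
      w.support.Nodup ∧ ∀ y ∈ w.support, ∃ k ≤ i, y = p k ∨ y = q k
  | _, _, .nil, i, hx, _, _ => by simpa [hx] using ⟨i, le_rfl, Or.inl rfl⟩
  | _, _, .cons _ .nil, i, hx, hpar, _ => by
    subst hx
    obtain rfl := eq_of_mk_mem_range hp hpq ((hpar 0 (by simp)).mpr (by decide))
    simpa [hpq i i] using ⟨⟨i, le_rfl, Or.inl rfl⟩, ⟨i, le_rfl, Or.inr rfl⟩⟩
  | x, _, .cons (v := y) hxy (.cons (v := z) hyz w'), i, hx, hpar, hAB => by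
    have h0 : s(x, y) ∈ Set.range fun k => s(p k, q k) := (hpar 0 (by simp)).mpr (by decide)
    have h1 : s(y, z) ∉ Set.range fun k => s(p k, q k) := (hpar 1 (by simp)).not.mpr (by decide)
    rw [hx] at h0
    have hy := eq_of_mk_mem_range hp hpq h0
    rw [hy] at h1 hyz
    obtain ⟨a, hai, hz⟩ := exists_lt_of_mk_notMem_range hq hpq hord hyz
      (hy ▸ hAB _ (by simp)) h1
    obtain ⟨hnodup, hle⟩ := support_nodup_and_le hp hq hpq hord w' hz
      (fun n hn => by simpa [Nat.even_add] using hpar (n + 2) (by simpa using hn))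
      (fun e he => hAB e (by simp [he]))
    subst hx hy
    have hpi : p i ∉ w'.support := fun hi => by
      obtain ⟨k, hk, h | h⟩ := hle _ hi
      · exact (hk.trans_lt hai).ne (hp h).symm
      · exact hpq i k h
    have hqi : q i ∉ w'.support := fun hi => by
      obtain ⟨k, hk, h | h⟩ := hle _ hi
      · exact hpq k i h.symm
      · exact (hk.trans_lt hai).ne (hq h).symm
    refine ⟨by simp [hnodup, hpi, hqi, hpq i i], ?_⟩
    simp only [Walk.support_cons, List.mem_cons]
    rintro y (rfl | rfl | hy)
    · exact ⟨i, le_rfl, Or.inl rfl⟩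
    · exact ⟨i, le_rfl, Or.inr rfl⟩
    · obtain ⟨k, hk, h⟩ := hle y hy
      exact ⟨k, hk.trans hai.le, h⟩

end AlternatingWalk

theorem IsOrderedMatching.support_nodup {V : Type*} {G : SimpleGraph V} {s : ℕ}
    {u v : Fin s → V} (hM : IsOrderedMatching G u v) {x b : V} (w : G.Walk x b)
    (hx : x ∈ Set.range u ∪ Set.range v)
    (hpar : ∀ (n : ℕ) (hn : n < w.edges.length), w.edges[n] ∈ omEdges u v ↔ Even n)
    (hAB : ∀ e ∈ w.edges, ∃ i j, e = s(u i, v j)) : w.support.Nodup := by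
  obtain ⟨⟨hinj, -⟩, -, hord⟩ := hM
  obtain ⟨hu, hv, huv⟩ := Sum.elim_injective.mp hinj
  rcases hx with ⟨i, rfl⟩ | ⟨i, rfl⟩
  · rw [omEdges_eq_range] at hpar
    exact (support_nodup_and_le hu hv huv hord w rfl hpar hAB).1
  · rw [omEdges_comm, omEdges_eq_range] at hpar
    refine (support_nodup_and_le (ι := (Fin s)ᵒᵈ) hv hu (fun a c h => huv c a h.symm)
      (fun a c h => hord c a h.symm) w rfl hpar fun e he => ?_).1
    obtain ⟨i, j, rfl⟩ := hAB e he
    exact ⟨j, i, Sym2.eq_swap⟩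

end DS

theorem stmt_2_general {V : Type*} (G : SimpleGraph V) {s : ℕ} (u v : Fin s → V)
    (hM : DS.IsOrderedMatching G u v) (x : V)
    (hx : x ∈ Set.range u ∪ Set.range v)
    {b : V} (w : G.Walk x b) (hadm : DS.IsAdmissible u v w x) :
    w.support.Nodup ∧ Odd w.length := by
  obtain ⟨-, halt, ⟨hne, hhead, hlast⟩, hAB⟩ := hadm
  refine ⟨hM.support_nodup w hx (halt.getElem_iff_even fun _ => hhead) hAB, ?_⟩
  rw [← w.length_edges]
  exact halt.odd_length hne hhead hlast

/-- Let `M` be an ordered matching in `G` and `p` an `M`-admissible path for a vertex `x`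
covered by `M`. Then `p` is a simple path and its length is odd. -/
theorem stmt_2 {V : Type*} [Fintype V] (G : SimpleGraph V) {s : ℕ} (u v : Fin s → V)
    (hM : DS.IsOrderedMatching G u v) (x : V)
    (hx : x ∈ Set.range u ∪ Set.range v)
    {b : V} (w : G.Walk x b) (hadm : DS.IsAdmissible u v w x) :
    w.support.Nodup ∧ Odd w.length :=
  stmt_2_general G u v hM x hx w hadm
end

section
/- Let G be a bipartite simple graph with a perfect ordered matching M = {{i, s+i} : i = 1,…,s} whose free parameter set X = {1,…,s} and partner set Y = {s+1,…,2s} form a bipartition of G. Write ℓ₀(M) = 2k − 1, and for each i = 1,…,s write ℓ(s+i) = 2k_i − 1, and set α_i = k_i − 1 and α_{s+i} = k − k_i. Then (1) α_i + α_{s+i} = k − 1 for all i = 1,…,s, and (2) if {i, s+j} ∈ E(G) with i < j, then α_i + α_{s+j} ≥ k. -/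
open SimpleGraph

/-! Appending the two edges `v i — u i — v j` (a matching edge, then a non-matching edge with
`i < j`) in front of an admissible path for `v j` gives an admissible path for `v i`, so
`ℓ(v i) ≥ ℓ(v j) + 2`, i.e. `kᵢ > kⱼ`; and `ℓ(v i) ≤ ℓ₀(M)` gives `kᵢ ≤ k`. -/

namespace DS

variable {V : Type*} {G : SimpleGraph V}

lemma bddAbove_of_sSup_ne_zero {S : Set ℕ} (h : sSup S ≠ 0) : BddAbove S := by
  by_contra hb
  exact h (Set.Infinite.Nat.sSup_eq_zero fun hfin => hb hfin.bddAbove)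

section Walks

variable {M : Set (Sym2 V)} {x y z b : V} {w : G.Walk z b}

lemma IsAlt.cons_cons (hw : IsAlt M w) (hfl : FirstLastInM M w) (hxy : G.Adj x y)
    (hyz : G.Adj y z) (h₁ : s(x, y) ∈ M) (h₂ : s(y, z) ∉ M) :
    IsAlt M (.cons hxy (.cons hyz w)) := by
  obtain ⟨hne, hhead, -⟩ := hfl
  unfold IsAlt at hw ⊢
  rw [Walk.edges_cons, Walk.edges_cons]
  refine List.isChain_cons_cons.mpr ⟨iff_of_true h₁ h₂, List.isChain_cons.mpr ⟨?_, hw⟩⟩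
  intro e he
  rw [List.head?_eq_some_head hne, Option.mem_some_iff] at he
  exact iff_of_false h₂ (not_not_intro (he ▸ hhead))

lemma FirstLastInM.cons_cons (hfl : FirstLastInM M w) (hxy : G.Adj x y) (hyz : G.Adj y z)
    (h₁ : s(x, y) ∈ M) : FirstLastInM M (.cons hxy (.cons hyz w)) := by
  obtain ⟨hne, -, hlast⟩ := hfl
  refine ⟨List.cons_ne_nil _ _, h₁, ?_⟩
  change (s(x, y) :: s(y, z) :: w.edges).getLast (by simp) ∈ M
  rwa [List.getLast_cons (by simp), List.getLast_cons hne]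

end Walks

section OrderedMatching

variable {s : ℕ} {u v : Fin s → V}

lemma mk_notMem_omEdges (hinj : Function.Injective (Sum.elim u v)) {i j : Fin s} (hij : i ≠ j) :
    s(u i, v j) ∉ omEdges u v := by
  rintro ⟨a, ha⟩
  rcases Sym2.eq_iff.mp ha with ⟨hu, hv⟩ | ⟨hu, -⟩
  · have hi : i = a := Sum.inl_injective (hinj (a₁ := .inl i) (a₂ := .inl a) hu)
    have hj : a = j := Sum.inr_injective (hinj (a₁ := .inr a) (a₂ := .inr j) hv.symm)
    exact hij (hi.trans hj)
  · exact Sum.inl_ne_inr (hinj (a₁ := .inl i) (a₂ := .inr a) hu)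

lemma IsAdmissible.cons_cons (hM : IsMatchingPair G u v) {i j : Fin s} (hij : i ≠ j)
    (hadj : G.Adj (u i) (v j)) {b : V} {w : G.Walk (v j) b} (hw : IsAdmissible u v w (v j)) :
    IsAdmissible u v (.cons (hM.2 i).symm (.cons hadj w)) (v i) := by
  obtain ⟨-, halt, hfl, hends⟩ := hw
  have h₁ : s(v i, u i) ∈ omEdges u v := ⟨i, Sym2.eq_swap⟩
  refine ⟨rfl, halt.cons_cons hfl _ _ h₁ (mk_notMem_omEdges hM.1 hij), hfl.cons_cons _ _ h₁, ?_⟩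
  intro e he
  rcases List.mem_cons.mp he with rfl | he
  · exact ⟨i, i, Sym2.eq_swap⟩
  rcases List.mem_cons.mp he with rfl | he
  · exact ⟨i, j, rfl⟩
  · exact hends e he

lemma length_le_ellv {x b : V} {w : G.Walk x b} (h : ellv G u v x ≠ 0)
    (hw : IsAdmissible u v w x) : w.length ≤ ellv G u v x :=
  le_csSup (bddAbove_of_sSup_ne_zero h) ⟨b, w, hw, rfl⟩

lemma exists_isAdmissible_length_eq_ellv {x : V} (h : ellv G u v x ≠ 0) :
    ∃ (b : V) (w : G.Walk x b), IsAdmissible u v w x ∧ w.length = ellv G u v x :=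
  Nat.sSup_mem (Set.nonempty_iff_ne_empty.mpr fun he => h (by simp [ellv, he]))
    (bddAbove_of_sSup_ne_zero h)

lemma ellv_le_ell0 (i : Fin s) : ellv G u v (v i) ≤ ell0 G u v :=
  le_csSup (Set.finite_range _).bddAbove ⟨i, rfl⟩

lemma ellv_add_two_le (hM : IsMatchingPair G u v) {i j : Fin s} (hij : i ≠ j)
    (hadj : G.Adj (u i) (v j)) (hi : ellv G u v (v i) ≠ 0) (hj : ellv G u v (v j) ≠ 0) :
    ellv G u v (v j) + 2 ≤ ellv G u v (v i) := by
  obtain ⟨b, w, hw, hlen⟩ := exists_isAdmissible_length_eq_ellv hj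
  rw [← hlen]
  exact length_le_ellv hi (hw.cons_cons hM hij hadj)

end OrderedMatching

end DS

theorem stmt_9_general {V : Type*} (G : SimpleGraph V) {t : ℕ} (u v : Fin t → V)
    (hM : DS.IsOrderedMatching G u v)
    (k : ℕ) (hk : DS.ell0 G u v = 2 * k - 1)
    (ki : Fin t → ℕ) (hki1 : ∀ i, 1 ≤ ki i)
    (hki : ∀ i, DS.ellv G u v (v i) = 2 * ki i - 1) :
    (∀ i, (ki i - 1) + (k - ki i) = k - 1) ∧
    (∀ i j : Fin t, i < j → G.Adj (u i) (v j) → k ≤ (ki i - 1) + (k - ki j)) := by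
  have hki_le : ∀ i, ki i ≤ k := fun i => by
    have hle := DS.ellv_le_ell0 (G := G) (u := u) (v := v) i
    rw [hki, hk] at hle
    have := hki1 i
    omega
  have hne : ∀ i, DS.ellv G u v (v i) ≠ 0 := fun i => by
    have := hki1 i
    rw [hki]
    omega
  refine ⟨fun i => by have := hki_le i; have := hki1 i; omega, fun i j hij hadj => ?_⟩
  have := DS.ellv_add_two_le hM.1 hij.ne hadj (hne i) (hne j)
  rw [hki, hki] at this
  have := hki_le j
  omega

/-- Let `G` be a bipartite graph with a perfect ordered matching `M` (presented by
`u, v : Fin t → V`) whose free parameter set `A = range u` and partner set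
`B = range v` form a bipartition of `G`. Write `ℓ₀(M) = 2k − 1` and
`ℓ(v i) = 2 kᵢ − 1`, and set `α_{u i} = kᵢ − 1`, `α_{v i} = k − kᵢ`. Then
(1) `α_{u i} + α_{v i} = k − 1` for all `i`, and
(2) if `{u i, v j} ∈ E(G)` with `i < j`, then `α_{u i} + α_{v j} ≥ k`. -/
theorem stmt_9 {V : Type*} [Fintype V] (G : SimpleGraph V) {t : ℕ} (u v : Fin t → V)
    (hM : DS.IsOrderedMatching G u v)
    (hperf : Function.Surjective (Sum.elim u v))
    (hB : ∀ i j : Fin t, ¬ G.Adj (v i) (v j))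
    (k : ℕ) (hk1 : 1 ≤ k) (hk : DS.ell0 G u v = 2 * k - 1)
    (ki : Fin t → ℕ) (hki1 : ∀ i, 1 ≤ ki i)
    (hki : ∀ i, DS.ellv G u v (v i) = 2 * ki i - 1) :
    (∀ i, (ki i - 1) + (k - ki i) = k - 1) ∧
    (∀ i j : Fin t, i < j → G.Adj (u i) (v j) → k ≤ (ki i - 1) + (k - ki j)) :=
  stmt_9_general G u v hM k hk ki hki1 hki
end
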